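/- arXiv:1806.10660 — 2 statements merged into one kernel-verified Lean document; each statement's English description precedes it below -/
import Mathlib

section
/- Assume unit costs. The expected nonadaptive cost of the round-robin permutation τ_RR for evaluating the score classification function f is at most 4·OPT(f), the minimum expected cost over all (adaptive) decision trees evaluating f. -/
open Finset

/-- Number of true bits of an assignment. -/
def N1 {n : ℕ} (a : Fin n → Bool) : ℕ :=
  (Finset.univ.filter (fun i => a i = true)).card

/-- Probability of an assignment. -/
noncomputable def pr {n : ℕ} (p : Fin n → ℝ) (a : Fin n → Bool) : ℝ :=
  ∏ i, if a i then p i else 1 - p i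
/-- Binary decision trees over `n` bits, with natural-number leaf labels. -/
inductive DTree (n : ℕ) : Type where
  | leaf : ℕ → DTree n
  | node : Fin n → DTree n → DTree n → DTree n

namespace DTree

/-- Output of the tree on assignment `a`. -/
def eval {n : ℕ} : DTree n → (Fin n → Bool) → ℕ
  | .leaf v, _ => v
  | .node i t0 t1, a => if a i then eval t1 a else eval t0 a

/-- Total cost of the queries made on assignment `a`. -/
noncomputable def cost {n : ℕ} (c : Fin n → ℝ) : DTree n → (Fin n → Bool) → ℝ
  | .leaf _, _ => 0
  | .node i t0 t1, a => c i + (if a i then cost c t1 a else cost c t0 a)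

/-- The list of indices queried on assignment `a`, in order. -/
def path {n : ℕ} : DTree n → (Fin n → Bool) → List (Fin n)
  | .leaf _, _ => []
  | .node i t0 t1, a => i :: (if a i then path t1 a else path t0 a)

/-- No index occurs twice on any root-to-leaf path (given already-used indices). -/
def Proper {n : ℕ} : DTree n → Finset (Fin n) → Prop
  | .leaf _, _ => True
  | .node i t0 t1, used =>
      i ∉ used ∧ Proper t0 (insert i used) ∧ Proper t1 (insert i used)

/-- Every root-to-leaf path queries all `n` indices (and no repeats). -/
def Full {n : ℕ} : DTree n → Finset (Fin n) → Prop
  | .leaf _, used => used = Finset.univ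
  | .node i t0 t1, used =>
      i ∉ used ∧ Full t0 (insert i used) ∧ Full t1 (insert i used)

end DTree
/-- Expected-cost-minimizing value over all decision trees evaluating `h`. -/
noncomputable def OPTcost {n : ℕ} (p c : Fin n → ℝ) (h : (Fin n → Bool) → ℕ) : ℝ :=
  sInf {x : ℝ | ∃ T : DTree n, T.Proper ∅ ∧ (∀ a, T.eval a = h a) ∧
    x = ∑ a : Fin n → Bool, T.cost c a * pr p a}

/-- Nonadaptive cost of querying in the order given by the list `l` on assignment `a`:
the total cost of the shortest prefix of `l` whose outcomes determine the value `h a`. -/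
noncomputable def naCost {n : ℕ} (c : Fin n → ℝ) (h : (Fin n → Bool) → ℕ)
    (a : Fin n → Bool) (l : List (Fin n)) : ℝ :=
  ((l.take (sInf {k | ∀ b : Fin n → Bool,
      (∀ i ∈ l.take k, b i = a i) → h b = h a})).map c).sum

/-- Expected nonadaptive cost of the query order `l` for evaluating `h`. -/
noncomputable def naExpCost {n : ℕ} (p c : Fin n → ℝ) (h : (Fin n → Bool) → ℕ)
    (l : List (Fin n)) : ℝ :=
  ∑ a : Fin n → Bool, naCost c h a l * pr p a

/-- Round-robin merge: alternately take the next not-yet-chosen element of the first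
list and of the second list, starting with the first. -/
def rrMerge {α : Type*} [DecidableEq α] : List α → List α → List α
  | [], l2 => l2
  | a :: l1, l2 => a :: rrMerge (l2.filter (fun x => x ≠ a)) l1
  termination_by l1 l2 => l1.length + l2.length
  decreasing_by
    have := List.length_filter_le (fun x => decide (x ≠ a)) l2
    simp only [List.length_cons]
    first
      | omega
      | (simp only [List.length_unattach]
         have h2 : ∀ P : {x // x ∈ l2} → Bool, (l2.attach.filter P).length ≤ l2.length :=
           fun P => (List.length_filter_le P _).trans (by simp)
         generalize hP : List.filter _ l2.attach = L
         have h3 := hP ▸ h2 _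
         omega)

/-!
For an assignment `a` of score `j`, a set of queried bits determines `f a` iff it contains at
least `α j` ones and at least `n + 1 - α (j + 1)` zeros; both amounts depend on `a` only through
its number of ones. Let `R₁ a` (resp. `R₀ a`) be the length of the shortest prefix of `σ¹`
(resp. `σ⁰`) containing enough ones (resp. zeros). Round robin has queried both prefixes after
`2 (R₁ a + R₀ a)` steps, so its cost is pointwise at most `2 R₁ + 2 R₀`.

It remains to show `E[R_b] ≤ E[cost T]` for every tree `T` evaluating `f`, i.e. that for every
`t` the first `t` bits of `σ^b` fall short of the required count of `b`s with probability at most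
that of the first `t` queries of `T`. This is proved by induction on `T`: conditioning on the
root's query reduces to the subtrees with a shifted threshold, and an exchange argument shows
that replacing the queried bit by the next bit of `σ^b`, which is at least as likely to be `b`,
does not increase the probability of falling short.
-/

open Finset

section

variable {n : ℕ}

def bitProb (p : Fin n → ℝ) (i : Fin n) (b : Bool) : ℝ := if b then p i else 1 - p i

lemma bitProb_not (p : Fin n → ℝ) (i : Fin n) (b : Bool) :
    bitProb p i (!b) = 1 - bitProb p i b := by
  cases b <;> simp [bitProb]

lemma bitProb_nonneg {p : Fin n → ℝ} (hp : ∀ i, 0 ≤ p i ∧ p i ≤ 1) (i : Fin n) (b : Bool) :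
    0 ≤ bitProb p i b := by
  cases b <;> simp [bitProb, hp i]

lemma pr_nonneg {p : Fin n → ℝ} (hp : ∀ i, 0 ≤ p i ∧ p i ≤ 1) (a : Fin n → Bool) :
    0 ≤ pr p a :=
  prod_nonneg fun i _ => bitProb_nonneg hp i (a i)

noncomputable def prob (p : Fin n → ℝ) (S : Set (Fin n → Bool)) : ℝ :=
  ∑ a, S.indicator (pr p) a

lemma prob_mono {p : Fin n → ℝ} (hp : ∀ i, 0 ≤ p i ∧ p i ≤ 1) {S T : Set (Fin n → Bool)}
    (h : S ⊆ T) : prob p S ≤ prob p T :=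
  sum_le_sum fun a _ => Set.indicator_le_indicator_of_subset h (pr_nonneg hp) a

lemma prob_congr {p : Fin n → ℝ} {S T : Set (Fin n → Bool)} (h : ∀ a, a ∈ S ↔ a ∈ T) :
    prob p S = prob p T := by
  rw [Set.ext h]

lemma sum_ite_true_eq_sum_ite_false {i : Fin n} (K : (Fin n → Bool) → ℝ)
    (hK : ∀ a v, K (Function.update a i v) = K a) :
    ∑ a, (if a i = true then K a else 0) = ∑ a, (if a i = false then K a else 0) := by
  have hinv : Function.Involutive fun a : Fin n → Bool => Function.update a i (!a i) := by
    intro a; simp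
  rw [← Equiv.sum_comp (Function.Involutive.toPerm _ hinv)]
  refine sum_congr rfl fun a _ => ?_
  cases h : a i <;> simp [h, hK]

lemma sum_bitProb_mul_eq (p : Fin n → ℝ) {i : Fin n} (K : (Fin n → Bool) → ℝ)
    (hK : ∀ a v, K (Function.update a i v) = K a) (v : Bool) :
    ∑ a, bitProb p i (a i) * K a = ∑ a, (if a i = v then K a else 0) := by
  have hsplit : ∀ a, bitProb p i (a i) * K a
      = p i * (if a i = true then K a else 0) + (1 - p i) * (if a i = false then K a else 0) := by
    intro a; cases a i <;> simp [bitProb]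
  simp only [hsplit, sum_add_distrib, ← mul_sum, ← sum_ite_true_eq_sum_ite_false K hK]
  cases v
  · rw [← sum_ite_true_eq_sum_ite_false K hK]; ring
  · ring

lemma pr_eq_bitProb_mul (p : Fin n → ℝ) (i : Fin n) (a : Fin n → Bool) :
    pr p a = bitProb p i (a i) * ∏ j ∈ univ.erase i, bitProb p j (a j) :=
  (mul_prod_erase _ (fun j => bitProb p j (a j)) (mem_univ i)).symm

lemma prob_eq_cond (p : Fin n → ℝ) (i : Fin n) {S S₁ S₀ : Set (Fin n → Bool)}
    (hS₁ : ∀ a, a i = true → (a ∈ S ↔ a ∈ S₁)) (hS₀ : ∀ a, a i = false → (a ∈ S ↔ a ∈ S₀))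
    (h₁ : ∀ a v, Function.update a i v ∈ S₁ ↔ a ∈ S₁)
    (h₀ : ∀ a v, Function.update a i v ∈ S₀ ↔ a ∈ S₀) :
    prob p S = p i * prob p S₁ + (1 - p i) * prob p S₀ := by
  classical
  let R : (Fin n → Bool) → ℝ := fun a => ∏ j ∈ univ.erase i, bitProb p j (a j)
  have hind : ∀ (T : Set (Fin n → Bool)) a,
      T.indicator (pr p) a = bitProb p i (a i) * T.indicator R a := by
    intro T a
    simp only [Set.indicator_apply, pr_eq_bitProb_mul p i a, mul_ite, mul_zero, R]
  have hK : ∀ T : Set (Fin n → Bool), (∀ a v, Function.update a i v ∈ T ↔ a ∈ T) →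
      ∀ a v, T.indicator R (Function.update a i v) = T.indicator R a := by
    intro T hT a v
    have hR : R (Function.update a i v) = R a :=
      prod_congr rfl fun j hj => by rw [Function.update_of_ne (ne_of_mem_erase hj)]
    simp only [Set.indicator_apply, hT, hR]
  unfold prob
  simp only [hind]
  rw [sum_bitProb_mul_eq p _ (hK S₁ h₁) true, sum_bitProb_mul_eq p _ (hK S₀ h₀) false,
    mul_sum, mul_sum, ← sum_add_distrib]
  refine sum_congr rfl fun a _ => ?_
  cases h : a i
  · simp [bitProb, Set.indicator_apply, hS₀ a h]
  · simp [bitProb, Set.indicator_apply, hS₁ a h]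

lemma pr_eq_bitProb_mul_mul (p : Fin n → ℝ) {i m : Fin n} (him : i ≠ m) (a : Fin n → Bool) :
    pr p a = bitProb p i (a i) * bitProb p m (a m) * ∏ j ∈ {i, m}ᶜ, bitProb p j (a j) := by
  classical
  rw [← prod_pair (f := fun j => bitProb p j (a j)) him, prod_mul_prod_compl]
  rfl

lemma sum_mul_le_sum_comp_mul {ι : Type*} [Fintype ι] {s : ι → ι} (hs : Function.Involutive s)
    (χ q : ι → ℝ) (h : ∀ a, 0 ≤ (χ (s a) - χ a) * (q a - q (s a))) :
    ∑ a, χ a * q a ≤ ∑ a, χ (s a) * q a := by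
  have hreindex : ∀ F : ι → ℝ, ∑ a, F (s a) = ∑ a, F a :=
    Equiv.sum_comp (Function.Involutive.toPerm _ hs)
  have hsum : ∑ a, (χ (s a) - χ a) * (q a - q (s a))
      = 2 * (∑ a, χ (s a) * q a - ∑ a, χ a * q a) := by
    simp only [sub_mul, mul_sub, sum_sub_distrib]
    rw [← hreindex fun a => χ a * q a, ← hreindex fun a => χ (s a) * q a]
    simp only [hs _]
    ring
  linarith [sum_nonneg fun a (_ : a ∈ univ) => h a]

/-- Exchange argument: if `S` prefers the value `b` at `i` to `b` at `m`, then `S` becomes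
likelier when the distributions of the two coordinates are exchanged so that `i` gets the larger
probability of showing `b`. -/
lemma prob_le_prob_comp_swap {p : Fin n → ℝ} (hp : ∀ i, 0 ≤ p i ∧ p i ≤ 1) {i m : Fin n}
    {b : Bool} (hw : bitProb p i b ≤ bitProb p m b) {S : Set (Fin n → Bool)}
    (hS : ∀ a, a m = b → a i ≠ b → a ∈ S → a ∘ Equiv.swap i m ∈ S) :
    prob p S ≤ prob p {a | a ∘ Equiv.swap i m ∈ S} := by
  classical
  by_cases him : i = m
  · subst him; simp
  let s : (Fin n → Bool) → Fin n → Bool := fun a => a ∘ Equiv.swap i m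
  have hs : Function.Involutive s := fun a => by ext j; simp [s]
  let χ : (Fin n → Bool) → ℝ := fun a => if a ∈ S then 1 else 0
  have hprob : ∀ T : Set (Fin n → Bool), prob p T = ∑ a, (if a ∈ T then 1 else 0) * pr p a :=
    fun T => sum_congr rfl fun a _ => by simp [Set.indicator_apply]
  rw [hprob, hprob]
  refine sum_mul_le_sum_comp_mul hs χ (pr p) fun a => ?_
  have hR : ∏ j ∈ {i, m}ᶜ, bitProb p j (s a j) = ∏ j ∈ {i, m}ᶜ, bitProb p j (a j) :=
    prod_congr rfl fun j hj => by
      simp only [mem_compl, mem_insert, mem_singleton, not_or] at hj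
      simp [s, Equiv.swap_apply_of_ne_of_ne hj.1 hj.2]
  have hpr : pr p a - pr p (s a) = (bitProb p i (a i) * bitProb p m (a m)
      - bitProb p i (a m) * bitProb p m (a i)) * ∏ j ∈ {i, m}ᶜ, bitProb p j (a j) := by
    rw [pr_eq_bitProb_mul_mul p him a, pr_eq_bitProb_mul_mul p him (s a), hR]
    simp only [s, Function.comp_apply, Equiv.swap_apply_left, Equiv.swap_apply_right]
    ring
  have hrest := prod_nonneg fun j (_ : j ∈ ({i, m} : Finset (Fin n))ᶜ) => bitProb_nonneg hp j (a j)
  rw [hpr]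
  rcases Bool.eq_or_eq_not (a i) (a m) with hai | hai
  · simp [hai]
  have hχ : ∀ {x y : Fin n → Bool}, (x ∈ S → y ∈ S) → χ x ≤ χ y := fun hxy => by
    simp only [χ]
    split_ifs <;> simp_all
  by_cases ham : a m = b
  · have hχa : χ a ≤ χ (s a) := hχ (hS a ham (by simp [hai, ham]))
    rw [hai, ham, bitProb_not, bitProb_not]
    exact mul_nonneg (by linarith) (mul_nonneg (by nlinarith) hrest)
  · have ham' : a m = !b := by cases b <;> simpa using ham
    have hχa : χ (s a) ≤ χ a := hχ fun h => by
      have := hS (s a) (by simp [s, hai, ham']) (by simp [s, ham]) h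
      rwa [show s a ∘ Equiv.swap i m = a from hs a] at this
    simp only [hai, ham', Bool.not_not, bitProb_not]
    exact mul_nonneg_of_nonpos_of_nonpos (by linarith)
      (mul_nonpos_of_nonpos_of_nonneg (by nlinarith) hrest)

def countVal (b : Bool) (a : Fin n → Bool) (l : List (Fin n)) : ℕ :=
  l.countP fun j => a j == b

lemma countVal_cons (b : Bool) (a : Fin n → Bool) (i : Fin n) (l : List (Fin n)) :
    countVal b a (i :: l) = countVal b a l + if a i = b then 1 else 0 := by
  simp [countVal, List.countP_cons]

lemma countVal_congr {b : Bool} {a a' : Fin n → Bool} {l : List (Fin n)}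
    (h : ∀ j ∈ l, a j = a' j) : countVal b a l = countVal b a' l :=
  List.countP_congr fun j hj => by simp [h j hj]

lemma countVal_perm (b : Bool) (a : Fin n → Bool) {l l' : List (Fin n)} (h : l.Perm l') :
    countVal b a l = countVal b a l' :=
  h.countP_eq _

lemma countVal_update {b : Bool} {a : Fin n → Bool} {l : List (Fin n)} {i : Fin n}
    (hi : i ∉ l) (v : Bool) : countVal b (Function.update a i v) l = countVal b a l :=
  countVal_congr fun j hj => Function.update_of_ne (by rintro rfl; exact hi hj) v a

lemma countVal_le_of_subset (b : Bool) (a : Fin n → Bool) {l l' : List (Fin n)}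
    (hl : l.Nodup) (h : l ⊆ l') : countVal b a l ≤ countVal b a l' :=
  (List.subperm_of_subset hl h).countP_le _

lemma countVal_take_mono (b : Bool) (a : Fin n → Bool) (l : List (Fin n)) {r r' : ℕ}
    (h : r ≤ r') : countVal b a (l.take r) ≤ countVal b a (l.take r') :=
  (List.take_sublist_take_left h).countP_le

lemma countVal_comp_perm (b : Bool) (a : Fin n → Bool) {l : List (Fin n)} (hl : l.Nodup)
    (σ : Equiv.Perm (Fin n)) (hσ : ∀ j, σ j ∈ l ↔ j ∈ l) :
    countVal b (a ∘ σ) l = countVal b a l := by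
  have hperm : (l.map σ).Perm l :=
    (List.perm_ext_iff_of_nodup (hl.map σ.injective) hl).2 fun j => by
      rw [List.mem_map]
      constructor
      · rintro ⟨x, hx, rfl⟩
        exact (hσ x).2 hx
      · exact fun hj => ⟨σ.symm j, (hσ _).1 (by simpa using hj), by simp⟩
  simpa [countVal, List.countP_map, Function.comp_def] using hperm.countP_eq (fun j => a j == b)

lemma countVal_true_add_countVal_false (a : Fin n → Bool) (l : List (Fin n)) :
    countVal true a l + countVal false a l = l.length := by
  simp [countVal, List.length_eq_countP_add_countP (fun j => a j)]

lemma countVal_eq_card (b : Bool) (a : Fin n → Bool) {l : List (Fin n)} (hl : l.Nodup) :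
    countVal b a l = #{j ∈ l.toFinset | a j = b} := by
  rw [hl.card_eq_countP, countVal]
  exact List.countP_congr fun j _ => by simp

lemma N1_eq_countVal_finRange (a : Fin n → Bool) : N1 a = countVal true a (List.finRange n) := by
  rw [countVal_eq_card _ _ (List.nodup_finRange n), List.toFinset_finRange, N1]

lemma countVal_eq_finRange (b : Bool) (a : Fin n → Bool) {l : List (Fin n)} (hl : l.Nodup)
    (hl_mem : ∀ j, j ∈ l) : countVal b a l = countVal b a (List.finRange n) :=
  countVal_perm b a ((List.perm_ext_iff_of_nodup hl (List.nodup_finRange n)).2 (by simp [hl_mem]))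

lemma N1_fill_false (a : Fin n → Bool) {Q : List (Fin n)} (hQ : Q.Nodup) :
    N1 (fun j => if j ∈ Q then a j else false) = countVal true a Q := by
  rw [N1, countVal_eq_card _ _ hQ]
  congr 1
  ext j
  by_cases hj : j ∈ Q <;> simp [hj]

lemma N1_fill_true_add (a : Fin n → Bool) {Q : List (Fin n)} (hQ : Q.Nodup) :
    N1 (fun j => if j ∈ Q then a j else true) + countVal false a Q = n := by
  rw [N1, countVal_eq_card _ _ hQ]
  have : #{j ∈ Q.toFinset | a j = false} = #{j | ¬(if j ∈ Q then a j else true) = true} := by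
    congr 1
    ext j
    by_cases hj : j ∈ Q <;> simp [hj]
  rw [this, card_filter_add_card_filter_not, card_univ, Fintype.card_fin]

lemma countVal_true_le_N1 (a : Fin n → Bool) {Q : List (Fin n)} (hQ : Q.Nodup) :
    countVal true a Q ≤ N1 a := by
  rw [N1_eq_countVal_finRange]
  exact countVal_le_of_subset true a hQ fun j _ => List.mem_finRange j

lemma countVal_false_add_N1_le (a : Fin n → Bool) {Q : List (Fin n)} (hQ : Q.Nodup) :
    countVal false a Q + N1 a ≤ n := by
  have h := countVal_true_add_countVal_false a (List.finRange n)
  have hQ := countVal_le_of_subset false a hQ fun j _ => List.mem_finRange j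
  rw [List.length_finRange, ← N1_eq_countVal_finRange] at h
  omega

lemma N1_eq_of_countVal_eq {b : Bool} {l : List (Fin n)} (hl : l.Nodup) (hl_mem : ∀ j, j ∈ l)
    {a a' : Fin n → Bool} (h : countVal b a l = countVal b a' l) : N1 a = N1 a' := by
  rw [countVal_eq_finRange b a hl hl_mem, countVal_eq_finRange b a' hl hl_mem] at h
  have ha := countVal_true_add_countVal_false a (List.finRange n)
  have ha' := countVal_true_add_countVal_false a' (List.finRange n)
  rw [N1_eq_countVal_finRange, N1_eq_countVal_finRange]
  cases b <;> omega

namespace DTree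

lemma Proper.notMem_of_mem_path {T : DTree n} {u : Finset (Fin n)} (hT : T.Proper u)
    (a : Fin n → Bool) {j : Fin n} (hj : j ∈ T.path a) : j ∉ u := by
  induction T generalizing u with
  | leaf => simp [path] at hj
  | node i t0 t1 ih0 ih1 =>
    obtain ⟨hi, h0, h1⟩ := hT
    rcases List.mem_cons.1 hj with rfl | hj
    · exact hi
    · have : j ∉ insert i u := by
        cases hai : a i
        · exact ih0 h0 (by simpa [hai] using hj)
        · exact ih1 h1 (by simpa [hai] using hj)
      exact fun hju => this (mem_insert_of_mem hju)

lemma Proper.nodup_path {T : DTree n} {u : Finset (Fin n)} (hT : T.Proper u) (a : Fin n → Bool) :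
    (T.path a).Nodup := by
  induction T generalizing u with
  | leaf => simp [path]
  | node i t0 t1 ih0 ih1 =>
    obtain ⟨-, h0, h1⟩ := hT
    cases hai : a i
    · simpa [path, hai] using ⟨fun h => notMem_of_mem_path h0 a h (mem_insert_self i u), ih0 h0⟩
    · simpa [path, hai] using ⟨fun h => notMem_of_mem_path h1 a h (mem_insert_self i u), ih1 h1⟩

lemma Proper.path_update {T : DTree n} {u : Finset (Fin n)} (hT : T.Proper u) {i : Fin n}
    (hi : i ∈ u) (a : Fin n → Bool) (v : Bool) : T.path (Function.update a i v) = T.path a := by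
  induction T generalizing u with
  | leaf => rfl
  | node j t0 t1 ih0 ih1 =>
    obtain ⟨hj, h0, h1⟩ := hT
    have hji : j ≠ i := by rintro rfl; exact hj hi
    simp only [path, Function.update_of_ne hji, ih0 h0 (mem_insert_of_mem hi),
      ih1 h1 (mem_insert_of_mem hi)]

lemma eval_eq_of_agree (T : DTree n) {a b : Fin n → Bool} (h : ∀ j ∈ T.path a, b j = a j) :
    T.eval b = T.eval a := by
  induction T with
  | leaf => rfl
  | node i t0 t1 ih0 ih1 =>
    have hi : b i = a i := h i List.mem_cons_self
    cases hai : a i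
    · simpa [eval, hi, hai] using ih0 fun j hj => h j (by simp [path, hai, hj])
    · simpa [eval, hi, hai] using ih1 fun j hj => h j (by simp [path, hai, hj])

lemma cost_eq_sum_map_path (c : Fin n → ℝ) (T : DTree n) (a : Fin n → Bool) :
    T.cost c a = ((T.path a).map c).sum := by
  induction T with
  | leaf => rfl
  | node i t0 t1 ih0 ih1 => cases hai : a i <;> simp [cost, path, hai, ih0, ih1]

lemma cost_eq_length {c : Fin n → ℝ} (hc : ∀ i, c i = 1) (T : DTree n) (a : Fin n → Bool) :
    T.cost c a = (T.path a).length := by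
  simp [cost_eq_sum_map_path, show c = fun _ => 1 from funext hc]

def queryAll (h : (Fin n → Bool) → ℕ) : List (Fin n) → (Fin n → Bool) → DTree n
  | [], ρ => .leaf (h ρ)
  | i :: l, ρ => .node i (queryAll h l (Function.update ρ i false))
      (queryAll h l (Function.update ρ i true))

lemma eval_queryAll (h : (Fin n → Bool) → ℕ) (l : List (Fin n)) (ρ a : Fin n → Bool) :
    (queryAll h l ρ).eval a = h fun j => if j ∈ l then a j else ρ j := by
  induction l generalizing ρ with
  | nil => simp [queryAll, eval]
  | cons i l ih =>
    have key : ∀ v, a i = v →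
        (fun j => if j ∈ l then a j else Function.update ρ i v j)
          = fun j => if j ∈ i :: l then a j else ρ j := by
      intro v hv
      ext j
      rcases eq_or_ne j i with rfl | hji <;> by_cases hjl : j ∈ l <;> simp [*]
    cases hai : a i <;> simp [queryAll, eval, hai, ih, key _ hai]

lemma proper_queryAll (h : (Fin n → Bool) → ℕ) {l : List (Fin n)} (hl : l.Nodup)
    (ρ : Fin n → Bool) {u : Finset (Fin n)} (hlu : ∀ j ∈ l, j ∉ u) : (queryAll h l ρ).Proper u := by
  induction l generalizing ρ u with
  | nil => trivial
  | cons i l ih =>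
    obtain ⟨hil, hl⟩ := List.nodup_cons.1 hl
    have hlu' : ∀ j ∈ l, j ∉ insert i u := fun j hj => by
      simp only [mem_insert, not_or]
      exact ⟨by rintro rfl; exact hil hj, hlu j (List.mem_cons_of_mem i hj)⟩
    exact ⟨hlu i List.mem_cons_self, ih hl _ hlu', ih hl _ hlu'⟩

lemma exists_proper_eval_eq (h : (Fin n → Bool) → ℕ) :
    ∃ T : DTree n, T.Proper ∅ ∧ ∀ a, T.eval a = h a :=
  ⟨queryAll h (List.finRange n) fun _ => false,
    proper_queryAll h (List.nodup_finRange n) _ (by simp),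
    fun a => by simp [eval_queryAll]⟩

end DTree

section Greedy

variable {p : Fin n → ℝ} {b : Bool}

lemma prob_cons_lt_le_of_bitProb_le (hp : ∀ i, 0 ≤ p i ∧ p i ≤ 1) {i m : Fin n}
    (hw : bitProb p i b ≤ bitProb p m b) {L M : List (Fin n)} (hL : L.Nodup) (hiL : i ∈ L)
    (hmL : m ∈ L) (hiM : i ∉ M) (hmM : m ∉ M) (g : ℕ → ℕ) :
    prob p {a | countVal b a (m :: M) < g (countVal b a L)}
      ≤ prob p {a | countVal b a (i :: M) < g (countVal b a L)} := by
  have hL_swap : ∀ a, countVal b (a ∘ Equiv.swap i m) L = countVal b a L := fun a =>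
    countVal_comp_perm b a hL _ fun j => by
      rcases eq_or_ne j i with rfl | hji
      · simp [hiL, hmL]
      rcases eq_or_ne j m with rfl | hjm
      · simp [hiL, hmL]
      · rw [Equiv.swap_apply_of_ne_of_ne hji hjm]
  have hM_swap : ∀ a, countVal b (a ∘ Equiv.swap i m) M = countVal b a M := fun a =>
    countVal_congr fun j hj => by
      rw [Function.comp_apply, Equiv.swap_apply_of_ne_of_ne (by rintro rfl; exact hiM hj)
        (by rintro rfl; exact hmM hj)]
  refine (prob_le_prob_comp_swap hp hw ?_).trans_eq (prob_congr fun a => ?_)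
  · intro a ham hai ha
    simp only [Set.mem_ofPred_eq, countVal_cons, hL_swap, hM_swap, Function.comp_apply,
      Equiv.swap_apply_right, ham, hai, if_true, if_false] at ha ⊢
    omega
  · simp [countVal_cons, hL_swap, hM_swap]

lemma prob_take_succ_lt_le (hp : ∀ i, 0 ≤ p i ∧ p i ≤ 1) {L : List (Fin n)} (hL : L.Nodup)
    (hsort : L.Pairwise fun j k => bitProb p k b ≤ bitProb p j b) {i : Fin n} (hiL : i ∈ L)
    (g : ℕ → ℕ) (s : ℕ) :
    prob p {a | countVal b a (L.take (s + 1)) < g (countVal b a L)}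
      ≤ prob p {a | countVal b a (i :: (L.erase i).take s) < g (countVal b a L)} := by
  obtain ⟨A, B, rfl⟩ := List.append_of_mem hiL
  have hiA : i ∉ A := fun h =>
    (List.nodup_cons.1 (List.nodup_middle.1 hL)).1 (List.mem_append_left _ h)
  rw [List.erase_append_right _ hiA, List.erase_cons_head]
  -- Either `i` is among the first `s + 1` entries and both sides count the same entries, or it
  -- comes later and is exchanged with the `(s + 1)`-st entry `A[s]`, which is likelier to be `b`.
  rcases le_or_gt A.length s with hA | hA
  · refine le_of_eq (prob_congr fun a => ?_)
    have hperm : ((A ++ i :: B).take (s + 1)).Perm (i :: (A ++ B).take s) := by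
      rw [List.take_append, List.take_append, List.take_of_length_le hA,
        List.take_of_length_le (by omega), show s + 1 - A.length = s - A.length + 1 by omega,
        List.take_succ_cons]
      exact List.perm_middle
    simp [countVal_perm b a hperm]
  · have htake := List.take_succ_eq_append_getElem hA
    have hm : A[s] ∉ A.take s := by
      have hnd : (A.take s ++ [A[s]]).Nodup :=
        htake ▸ hL.sublist ((List.take_sublist _ _).trans (List.sublist_append_left _ _))
      exact (List.nodup_cons.1 (List.nodup_append_comm.1 hnd)).1
    have hw : bitProb p i b ≤ bitProb p A[s] b :=
      (List.pairwise_append.1 hsort).2.2 _ (List.getElem_mem hA) i List.mem_cons_self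
    rw [List.take_append_of_le_length hA, List.take_append_of_le_length hA.le, htake]
    calc prob p {a | countVal b a (A.take s ++ [A[s]]) < g (countVal b a (A ++ i :: B))}
        = prob p {a | countVal b a (A[s] :: A.take s) < g (countVal b a (A ++ i :: B))} :=
          prob_congr fun a => by
            rw [Set.mem_ofPred_eq, Set.mem_ofPred_eq,
              countVal_perm b a (List.perm_append_singleton _ _)]
      _ ≤ _ := prob_cons_lt_le_of_bitProb_le hp hw hL (by simp) (by simp [List.getElem_mem])
          (fun h => hiA (List.mem_of_mem_take h)) hm g

/-- The threshold left for the other coordinates once a coordinate with value `v` has been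
counted towards the threshold `g`. -/
def residualThreshold (b v : Bool) (g : ℕ → ℕ) (k : ℕ) : ℕ :=
  g (k + if v = b then 1 else 0) - if v = b then 1 else 0

lemma prob_cons_lt_eq_cond {L : List (Fin n)} (hL : L.Nodup) {i : Fin n}
    (hiL : i ∈ L) (Q : Bool → (Fin n → Bool) → List (Fin n)) (hQi : ∀ v a, i ∉ Q v a)
    (hQ : ∀ v a w, Q v (Function.update a i w) = Q v a) (g : ℕ → ℕ) :
    prob p {a | countVal b a (i :: Q (a i) a) < g (countVal b a L)}
      = p i * prob p {a | countVal b a (Q true a)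
          < residualThreshold b true g (countVal b a (L.erase i))}
        + (1 - p i) * prob p {a | countVal b a (Q false a)
          < residualThreshold b false g (countVal b a (L.erase i))} := by
  have hcount : ∀ a, countVal b a L = countVal b a (L.erase i) + if a i = b then 1 else 0 :=
    fun a => by rw [countVal_perm b a (List.perm_cons_erase hiL), countVal_cons]
  have hiL' : i ∉ L.erase i := hL.not_mem_erase
  apply prob_eq_cond
  · intro a ha
    simp only [Set.mem_ofPred_eq, countVal_cons, hcount, ha, residualThreshold]
    split_ifs <;> omega
  · intro a ha
    simp only [Set.mem_ofPred_eq, countVal_cons, hcount, ha, residualThreshold]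
    split_ifs <;> omega
  · intro a w
    simp only [Set.mem_ofPred_eq, hQ, countVal_update (hQi _ _), countVal_update hiL']
  · intro a w
    simp only [Set.mem_ofPred_eq, hQ, countVal_update (hQi _ _), countVal_update hiL']

lemma prob_path_take_succ_lt_eq_cond {i : Fin n} {t₀ t₁ : DTree n} {u : Finset (Fin n)}
    (hT : (DTree.node i t₀ t₁).Proper u) {L : List (Fin n)} (hL : L.Nodup) (hiL : i ∈ L)
    (g : ℕ → ℕ) (s : ℕ) :
    prob p {a | countVal b a (((DTree.node i t₀ t₁).path a).take (s + 1)) < g (countVal b a L)}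
      = p i * prob p {a | countVal b a ((t₁.path a).take s)
          < residualThreshold b true g (countVal b a (L.erase i))}
        + (1 - p i) * prob p {a | countVal b a ((t₀.path a).take s)
          < residualThreshold b false g (countVal b a (L.erase i))} := by
  obtain ⟨-, h₀, h₁⟩ := hT
  let Q : Bool → (Fin n → Bool) → List (Fin n) := fun v a =>
    (if v then t₁.path a else t₀.path a).take s
  have hQi : ∀ v a, i ∉ Q v a := fun v a h => by
    cases v
    · exact h₀.notMem_of_mem_path a (List.mem_of_mem_take h) (mem_insert_self i u)
    · exact h₁.notMem_of_mem_path a (List.mem_of_mem_take h) (mem_insert_self i u)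
  have hQ : ∀ v a w, Q v (Function.update a i w) = Q v a := fun v a w => by
    cases v
    · simp [Q, h₀.path_update (mem_insert_self i u)]
    · simp [Q, h₁.path_update (mem_insert_self i u)]
  exact prob_cons_lt_eq_cond hL hiL Q hQi hQ g

/-- Greedy is optimal for reaching a count threshold: among all adaptive ways of querying `t`
coordinates (the first `t` queries of a decision tree), querying the `t` coordinates most
likely to show `b` minimises the probability of falling short of a threshold that depends on
the total count only. -/
theorem prob_countVal_take_lt_le (hp : ∀ i, 0 ≤ p i ∧ p i ≤ 1) {T : DTree n}
    {u : Finset (Fin n)} (hT : T.Proper u) {L : List (Fin n)} (hL : L.Nodup)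
    (hLu : ∀ j, j ∈ L ↔ j ∉ u) (hsort : L.Pairwise fun j k => bitProb p k b ≤ bitProb p j b)
    (g : ℕ → ℕ) (t : ℕ) :
    prob p {a | countVal b a (L.take t) < g (countVal b a L)}
      ≤ prob p {a | countVal b a ((T.path a).take t) < g (countVal b a L)} := by
  induction T generalizing u L g t with
  | leaf =>
    refine prob_mono hp fun a ha => ?_
    simp only [Set.mem_ofPred_eq, DTree.path, List.take_nil, countVal, List.countP_nil] at ha ⊢
    omega
  | node i t₀ t₁ ih₀ ih₁ =>
    rcases t with _ | s
    · simp
    obtain ⟨hiu, h₀, h₁⟩ := hT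
    have hiL : i ∈ L := (hLu i).2 hiu
    have hiL' : i ∉ L.erase i := hL.not_mem_erase
    have hLu' : ∀ j, j ∈ L.erase i ↔ j ∉ insert i u := fun j => by
      rw [hL.mem_erase_iff, mem_insert, hLu]; tauto
    have hsort' := hsort.sublist (L.erase_sublist (a := i))
    calc prob p {a | countVal b a (L.take (s + 1)) < g (countVal b a L)}
        ≤ prob p {a | countVal b a (i :: (L.erase i).take s) < g (countVal b a L)} :=
          prob_take_succ_lt_le hp hL hsort hiL g s
      _ = p i * prob p {a | countVal b a ((L.erase i).take s)
              < residualThreshold b true g (countVal b a (L.erase i))}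
          + (1 - p i) * prob p {a | countVal b a ((L.erase i).take s)
              < residualThreshold b false g (countVal b a (L.erase i))} :=
          prob_cons_lt_eq_cond hL hiL (fun _ _ => (L.erase i).take s)
            (fun _ _ h => hiL' (List.mem_of_mem_take h)) (fun _ _ _ => rfl) g
      _ ≤ p i * prob p {a | countVal b a ((t₁.path a).take s)
              < residualThreshold b true g (countVal b a (L.erase i))}
          + (1 - p i) * prob p {a | countVal b a ((t₀.path a).take s)
              < residualThreshold b false g (countVal b a (L.erase i))} :=
          add_le_add
            (mul_le_mul_of_nonneg_left (ih₁ h₁ (hL.erase i) hLu' hsort' _ s) (hp i).1)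
            (mul_le_mul_of_nonneg_left (ih₀ h₀ (hL.erase i) hLu' hsort' _ s)
              (sub_nonneg.2 (hp i).2))
      _ = _ := (prob_path_take_succ_lt_eq_cond ⟨hiu, h₀, h₁⟩ hL hiL g s).symm

end Greedy

noncomputable def reachLength (b : Bool) (a : Fin n → Bool) (l : List (Fin n)) (k : ℕ) : ℕ :=
  sInf {t | k ≤ countVal b a (l.take t)}

lemma reachLength_le_iff {b : Bool} {a : Fin n → Bool} {l : List (Fin n)} {k : ℕ}
    (hk : k ≤ countVal b a l) (t : ℕ) :
    reachLength b a l k ≤ t ↔ k ≤ countVal b a (l.take t) := by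
  have hne : l.length ∈ {t | k ≤ countVal b a (l.take t)} := by simpa using hk
  refine ⟨fun h => (Nat.sInf_mem ⟨_, hne⟩).trans (countVal_take_mono b a l h),
    fun h => Nat.sInf_le h⟩

lemma reachLength_le_length {b : Bool} {a : Fin n → Bool} {l : List (Fin n)} {k : ℕ}
    (hk : k ≤ countVal b a l) : reachLength b a l k ≤ l.length :=
  (reachLength_le_iff hk _).2 (by simpa using hk)

lemma sum_mul_pr_eq_sum_prob (p : Fin n → ℝ) (w : (Fin n → Bool) → ℕ) {N : ℕ}
    (hw : ∀ a, w a ≤ N) :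
    ∑ a, (w a : ℝ) * pr p a = ∑ t ∈ range N, prob p {a | t < w a} := by
  classical
  unfold prob
  rw [sum_comm]
  refine sum_congr rfl fun a _ => ?_
  simp only [Set.indicator_apply, Set.mem_ofPred_eq]
  rw [← sum_filter, sum_const, nsmul_eq_mul]
  congr
  rw [show (range N).filter (· < w a) = range (w a) by ext t; simp; have := hw a; omega]
  simp

lemma sum_mul_pr_le_of_prob_lt_le (p : Fin n → ℝ) {w v : (Fin n → Bool) → ℕ} {N : ℕ}
    (hw : ∀ a, w a ≤ N) (hv : ∀ a, v a ≤ N)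
    (h : ∀ t, prob p {a | t < w a} ≤ prob p {a | t < v a}) :
    ∑ a, (w a : ℝ) * pr p a ≤ ∑ a, (v a : ℝ) * pr p a := by
  rw [sum_mul_pr_eq_sum_prob p w hw, sum_mul_pr_eq_sum_prob p v hv]
  exact sum_le_sum fun t _ => h t

theorem sum_reachLength_mul_pr_le {p : Fin n → ℝ} (hp : ∀ i, 0 ≤ p i ∧ p i ≤ 1) {b : Bool}
    {l : List (Fin n)} (hl : l.Nodup) (hl_mem : ∀ j, j ∈ l)
    (hsort : l.Pairwise fun j k => bitProb p k b ≤ bitProb p j b)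
    {r : (Fin n → Bool) → ℕ} (hr : Function.FactorsThrough r fun a => countVal b a l)
    {T : DTree n} (hT : T.Proper ∅) (hpath : ∀ a, r a ≤ countVal b a (T.path a)) :
    ∑ a, (reachLength b a l (r a) : ℝ) * pr p a ≤ ∑ a, ((T.path a).length : ℝ) * pr p a := by
  have hsub : ∀ a, T.path a ⊆ l := fun a j _ => hl_mem j
  have hrl : ∀ a, r a ≤ countVal b a l := fun a =>
    (hpath a).trans (countVal_le_of_subset b a (hT.nodup_path a) (hsub a))
  set g := Function.extend (fun a => countVal b a l) r 0
  have hg : ∀ a, g (countVal b a l) = r a := hr.extend_apply 0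
  refine sum_mul_pr_le_of_prob_lt_le p (fun a => reachLength_le_length (hrl a))
    (fun a => (List.subperm_of_subset (hT.nodup_path a) (hsub a)).length_le) fun t => ?_
  calc prob p {a | t < reachLength b a l (r a)}
      = prob p {a | countVal b a (l.take t) < g (countVal b a l)} :=
        prob_congr fun a => by
          rw [Set.mem_ofPred_eq, Set.mem_ofPred_eq, hg, ← not_le, reachLength_le_iff (hrl a),
            not_le]
    _ ≤ prob p {a | countVal b a ((T.path a).take t) < g (countVal b a l)} :=
        prob_countVal_take_lt_le hp hT hl (by simp [hl_mem]) hsort g t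
    _ ≤ prob p {a | t < (T.path a).length} := prob_mono hp fun a ha => by
        by_contra hle
        simp only [Set.mem_ofPred_eq, hg, not_lt] at ha hle
        rw [List.take_of_length_le hle] at ha
        exact absurd (hpath a) (not_le.2 ha)

lemma List.mem_take_filter {α : Type*} {l : List α} {P : α → Bool} {k : ℕ} {x : α}
    (hx : x ∈ l.take k) (hP : P x) : x ∈ (l.filter P).take k := by
  induction l generalizing k with
  | nil => simp at hx
  | cons y l ih =>
    cases k with
    | zero => simp at hx
    | succ k =>
      rw [List.take_succ_cons, List.mem_cons] at hx
      rcases hx with rfl | hx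
      · simp [hP]
      · by_cases hy : P y
        · simp [hy, ih hx]
        · simpa [List.filter_cons, hy] using
            List.take_subset_take_left _ (Nat.le_succ k) (ih hx)

section RoundRobin

variable {α : Type*} [DecidableEq α]

lemma rrMerge_cons (a : α) (l₁ l₂ : List α) :
    rrMerge (a :: l₁) l₂ = a :: rrMerge (l₂.filter (· ≠ a)) l₁ := by
  rw [rrMerge]

/-- `rrMerge.induct`, with the recursive call stated without `List.attach`. -/
theorem rrMerge_induction {motive : List α → List α → Prop} (nil : ∀ l₂, motive [] l₂)
    (cons : ∀ a l₁ l₂, motive (l₂.filter (· ≠ a)) l₁ → motive (a :: l₁) l₂) (l₁ l₂ : List α) :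
    motive l₁ l₂ := by
  induction l₁, l₂ using rrMerge.induct with
  | case1 l₂ => exact nil l₂
  | case2 a l₁ l₂ ih =>
    rw [List.unattach_filter (g := (· ≠ a)) (hf := fun _ _ => rfl), List.unattach_attach] at ih
    exact cons a l₁ l₂ ih

lemma mem_rrMerge {l₁ l₂ : List α} {x : α} (hx : x ∈ rrMerge l₁ l₂) : x ∈ l₁ ∨ x ∈ l₂ := by
  induction l₁, l₂ using rrMerge_induction with
  | nil l₂ => rw [rrMerge] at hx; exact .inr hx
  | cons a l₁ l₂ ih =>
    rw [rrMerge_cons, List.mem_cons] at hx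
    rcases hx with rfl | hx
    · exact .inl List.mem_cons_self
    · rcases ih hx with h | h
      · exact .inr (List.mem_of_mem_filter h)
      · exact .inl (List.mem_cons_of_mem a h)

lemma nodup_rrMerge {l₁ l₂ : List α} (h₁ : l₁.Nodup) (h₂ : l₂.Nodup) : (rrMerge l₁ l₂).Nodup := by
  induction l₁, l₂ using rrMerge_induction with
  | nil l₂ => rwa [rrMerge]
  | cons a l₁ l₂ ih =>
    obtain ⟨ha, h₁⟩ := List.nodup_cons.1 h₁
    rw [rrMerge_cons]
    refine List.nodup_cons.2 ⟨fun h => ?_, ih (h₂.filter _) h₁⟩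
    rcases mem_rrMerge h with h | h
    · simp at h
    · exact ha h

lemma take_subset_take_rrMerge (l₁ l₂ : List α) (k : ℕ) :
    l₁.take k ⊆ (rrMerge l₁ l₂).take (2 * k - 1) ∧ l₂.take k ⊆ (rrMerge l₁ l₂).take (2 * k) := by
  induction l₁, l₂ using rrMerge_induction generalizing k with
  | nil l₂ =>
    rw [rrMerge]
    exact ⟨by simp, List.take_subset_take_left _ (by omega)⟩
  | cons a l₁ l₂ ih =>
    rcases k with _ | k
    · simp
    rw [rrMerge_cons, show 2 * (k + 1) - 1 = 2 * k + 1 by omega,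
      show 2 * (k + 1) = (2 * (k + 1) - 1) + 1 by omega, List.take_succ_cons, List.take_succ_cons,
      List.take_succ_cons]
    refine ⟨List.cons_subset_cons _ (ih k).2, fun x hx => ?_⟩
    by_cases hxa : x = a
    · exact hxa ▸ List.mem_cons_self
    · exact List.mem_cons_of_mem a ((ih (k + 1)).1 (List.mem_take_filter hx (by simpa using hxa)))

end RoundRobin

def Determines (h : (Fin n → Bool) → ℕ) (a : Fin n → Bool) (Q : List (Fin n)) : Prop :=
  ∀ a', (∀ j ∈ Q, a' j = a j) → h a' = h a

lemma DTree.determines_path {T : DTree n} {h : (Fin n → Bool) → ℕ} (hT : ∀ a, T.eval a = h a)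
    (a : Fin n → Bool) : Determines h a (T.path a) := fun a' ha' => by
  rw [← hT, ← hT, T.eval_eq_of_agree ha']

lemma naCost_le_of_determines {c : Fin n → ℝ} (hc : ∀ i, c i = 1) {h : (Fin n → Bool) → ℕ}
    {a : Fin n → Bool} {l : List (Fin n)} {k : ℕ} (hk : Determines h a (l.take k)) :
    naCost c h a l ≤ k := by
  obtain rfl : c = fun _ => 1 := funext hc
  simp only [naCost, List.map_const', List.sum_replicate, nsmul_eq_mul, mul_one]
  exact_mod_cast (List.length_take_le _ _).trans (Nat.sInf_le hk)

theorem naExpCost_rrMerge_le {p c : Fin n → ℝ} (hp : ∀ i, 0 ≤ p i ∧ p i ≤ 1)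
    (hc : ∀ i, c i = 1) {h : (Fin n → Bool) → ℕ} (need : Bool → (Fin n → Bool) → ℕ)
    (hneed : ∀ b, Function.FactorsThrough (need b) N1)
    (hdet : ∀ a Q, Q.Nodup → (Determines h a Q ↔ ∀ b, need b a ≤ countVal b a Q))
    {l : Bool → List (Fin n)} (hl : ∀ b, (l b).Nodup) (hl_mem : ∀ b j, j ∈ l b)
    (hsort : ∀ b, (l b).Pairwise fun i j => bitProb p j b ≤ bitProb p i b)
    {T : DTree n} (hT : T.Proper ∅) (hTh : ∀ a, T.eval a = h a) :
    naExpCost p c h (rrMerge (l true) (l false)) ≤ 4 * ∑ a, T.cost c a * pr p a := by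
  let R : Bool → (Fin n → Bool) → ℕ := fun b a => reachLength b a (l b) (need b a)
  have hpath : ∀ b a, need b a ≤ countVal b a (T.path a) := fun b a =>
    (hdet a _ (hT.nodup_path a)).1 (T.determines_path hTh a) b
  have hneed_le : ∀ b a, need b a ≤ countVal b a (l b) := fun b a =>
    (hpath b a).trans (countVal_le_of_subset b a (hT.nodup_path a) fun j _ => hl_mem b j)
  have hE : ∀ b, ∑ a, (R b a : ℝ) * pr p a ≤ ∑ a, T.cost c a * pr p a := fun b => by
    simp only [DTree.cost_eq_length hc]
    exact sum_reachLength_mul_pr_le hp (hl b) (hl_mem b) (hsort b)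
      (fun a a' e => hneed b (N1_eq_of_countVal_eq (hl b) (hl_mem b) e)) hT (hpath b)
  have hcost : ∀ a, naCost c h a (rrMerge (l true) (l false)) ≤ 2 * (R true a + R false a) := by
    intro a
    set k := 2 * (R true a + R false a)
    have hsub : ∀ b, (l b).take (R b a) ⊆ (rrMerge (l true) (l false)).take k := by
      intro b
      cases b
      · exact List.Subset.trans (take_subset_take_rrMerge _ _ _).2
          (List.take_subset_take_left _ (by omega))
      · exact List.Subset.trans (take_subset_take_rrMerge _ _ _).1
          (List.take_subset_take_left _ (by omega))
    have hdet_k : Determines h a ((rrMerge (l true) (l false)).take k) :=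
      (hdet a _ ((nodup_rrMerge (hl true) (hl false)).sublist (List.take_sublist _ _))).2 fun b =>
        ((reachLength_le_iff (hneed_le b a) _).1 le_rfl).trans
          (countVal_le_of_subset b a ((hl b).sublist (List.take_sublist _ _)) (hsub b))
    exact_mod_cast naCost_le_of_determines hc hdet_k
  calc naExpCost p c h (rrMerge (l true) (l false))
      ≤ ∑ a, (2 * ((R true a : ℝ) + R false a)) * pr p a :=
        sum_le_sum fun a _ => mul_le_mul_of_nonneg_right (hcost a) (pr_nonneg hp a)
    _ = 2 * ∑ a, (R true a : ℝ) * pr p a + 2 * ∑ a, (R false a : ℝ) * pr p a := by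
        rw [mul_sum, mul_sum, ← sum_add_distrib]
        exact sum_congr rfl fun a _ => by ring
    _ ≤ 4 * ∑ a, T.cost c a * pr p a := by linarith [hE true, hE false]

lemma eq_of_mem_band {B : ℕ} {α : ℕ → ℕ} (hmono : ∀ j, 1 ≤ j → j ≤ B → α j < α (j + 1))
    {j j' m : ℕ} (h : 1 ≤ j ∧ j ≤ B ∧ α j ≤ m ∧ m < α (j + 1))
    (h' : 1 ≤ j' ∧ j' ≤ B ∧ α j' ≤ m ∧ m < α (j' + 1)) : j = j' := by
  have hmon : MonotoneOn α (Set.Icc 1 (B + 1)) :=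
    monotoneOn_of_le_add_one Set.ordConnected_Icc fun k _ hk hk1 =>
      (hmono k hk.1 (by simp only [Set.mem_Icc] at hk1; omega)).le
  have key : ∀ {k k'}, 1 ≤ k → k' ≤ B → k < k' → α (k + 1) ≤ α k' := fun hk hk' hlt =>
    hmon ⟨by omega, by omega⟩ ⟨by omega, by omega⟩ hlt
  rcases lt_trichotomy j j' with hlt | heq | hlt
  · have := key h.1 h'.2.1 hlt; omega
  · exact heq
  · have := key h'.1 h.2.1 hlt; omega

/-- The number of ones (for `b = true`) or zeros (for `b = false`) a certificate for the score
classification `f` at `a` must contain. -/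
def scoreThreshold (α : ℕ → ℕ) (f : (Fin n → Bool) → ℕ) (b : Bool) (a : Fin n → Bool) : ℕ :=
  if b then α (f a) else n + 1 - α (f a + 1)

section Score

variable {B : ℕ} {α : ℕ → ℕ} {f : (Fin n → Bool) → ℕ}

lemma scoreThreshold_factorsThrough (hmono : ∀ j, 1 ≤ j → j ≤ B → α j < α (j + 1))
    (hf : ∀ a, 1 ≤ f a ∧ f a ≤ B ∧ α (f a) ≤ N1 a ∧ N1 a < α (f a + 1)) (b : Bool) :
    Function.FactorsThrough (scoreThreshold α f b) N1 := fun a a' h => by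
  have : f a = f a' := eq_of_mem_band hmono (hf a) (by rw [h]; exact hf a')
  simp [scoreThreshold, this]

lemma determines_iff_scoreThreshold_le (hmono : ∀ j, 1 ≤ j → j ≤ B → α j < α (j + 1))
    (hf : ∀ a, 1 ≤ f a ∧ f a ≤ B ∧ α (f a) ≤ N1 a ∧ N1 a < α (f a + 1)) (a : Fin n → Bool)
    {Q : List (Fin n)} (hQ : Q.Nodup) :
    Determines f a Q ↔ ∀ b, scoreThreshold α f b a ≤ countVal b a Q := by
  constructor
  · intro hdet b
    cases b
    · have hfill := hdet (fun j => if j ∈ Q then a j else true) fun j hj => if_pos hj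
      have h1 := (hf fun j => if j ∈ Q then a j else true).2.2.2
      have h2 := N1_fill_true_add a hQ
      rw [hfill] at h1
      simp only [scoreThreshold, Bool.false_eq_true, if_false]
      omega
    · have hfill := hdet (fun j => if j ∈ Q then a j else false) fun j hj => if_pos hj
      have h1 := (hf fun j => if j ∈ Q then a j else false).2.2.1
      rw [hfill, N1_fill_false a hQ] at h1
      simpa [scoreThreshold] using h1
  · intro hQa a' ha'
    have h₁ := hQa true
    have h₀ := hQa false
    simp only [scoreThreshold, if_true, Bool.false_eq_true, if_false,
      countVal_congr (b := _) (l := Q) fun j hj => (ha' j hj).symm] at h₁ h₀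
    have := countVal_true_le_N1 a' hQ
    have := countVal_false_add_N1_le a' hQ
    exact eq_of_mem_band hmono (hf a') ⟨(hf a).1, (hf a).2.1, by omega, by omega⟩

end Score

end

theorem stmt6_general {n : ℕ} (p c : Fin n → ℝ)
    (hp : ∀ i, 0 < p i ∧ p i < 1) (hc : ∀ i, c i = 1)
    (B : ℕ) (α : ℕ → ℕ)
    (hmono : ∀ j, 1 ≤ j → j ≤ B → α j < α (j + 1))
    (f : (Fin n → Bool) → ℕ)
    (hf : ∀ a, 1 ≤ f a ∧ f a ≤ B ∧ α (f a) ≤ N1 a ∧ N1 a < α (f a + 1))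
    (l1 l0 : List (Fin n))
    (hl1 : l1.Nodup ∧ (∀ i, i ∈ l1) ∧ l1.Pairwise (fun i j => p j ≤ p i))
    (hl0 : l0.Nodup ∧ (∀ i, i ∈ l0) ∧ l0.Pairwise (fun i j => p i ≤ p j)) :
    naExpCost p c f (rrMerge l1 l0) ≤ 4 * OPTcost p c f := by
  have hp' : ∀ i, 0 ≤ p i ∧ p i ≤ 1 := fun i => ⟨(hp i).1.le, (hp i).2.le⟩
  have hsort : ∀ b, (cond b l1 l0).Pairwise fun i j => bitProb p j b ≤ bitProb p i b
    | true => hl1.2.2.imp fun h => h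
    | false => hl0.2.2.imp fun {i j} h => show 1 - p j ≤ 1 - p i from sub_le_sub_left h 1
  have hT : ∀ T : DTree n, T.Proper ∅ → (∀ a, T.eval a = f a) →
      naExpCost p c f (rrMerge l1 l0) ≤ 4 * ∑ a, T.cost c a * pr p a := fun T hT hTf =>
    naExpCost_rrMerge_le (l := fun b => cond b l1 l0) hp' hc (scoreThreshold α f)
      (scoreThreshold_factorsThrough hmono hf)
      (fun a _ hQ => determines_iff_scoreThreshold_le hmono hf a hQ)
      (fun b => by cases b; exacts [hl0.1, hl1.1]) (fun b => by cases b; exacts [hl0.2.1, hl1.2.1])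
      hsort hT hTf
  obtain ⟨T₀, hT₀, hT₀f⟩ := DTree.exists_proper_eval_eq f
  have : naExpCost p c f (rrMerge l1 l0) / 4 ≤ OPTcost p c f :=
    le_csInf ⟨_, T₀, hT₀, hT₀f, rfl⟩ fun x ⟨T, hT', hTf, hx⟩ => by
      have := hT T hT' hTf
      rw [hx]
      linarith
  linarith

theorem stmt6 {n : ℕ} (hn : 1 ≤ n) (p c : Fin n → ℝ)
    (hp : ∀ i, 0 < p i ∧ p i < 1) (hc : ∀ i, c i = 1)
    (B : ℕ) (hB : 2 ≤ B) (α : ℕ → ℕ)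
    (hα1 : α 1 = 0) (hαtop : α (B + 1) = n + 1)
    (hmono : ∀ j, 1 ≤ j → j ≤ B → α j < α (j + 1))
    (f : (Fin n → Bool) → ℕ)
    (hf : ∀ a, 1 ≤ f a ∧ f a ≤ B ∧ α (f a) ≤ N1 a ∧ N1 a < α (f a + 1))
    (l1 l0 : List (Fin n))
    (hl1 : l1.Nodup ∧ (∀ i, i ∈ l1) ∧ l1.Pairwise (fun i j => p j ≤ p i))
    (hl0 : l0.Nodup ∧ (∀ i, i ∈ l0) ∧ l0.Pairwise (fun i j => p i ≤ p j)) :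
    naExpCost p c f (rrMerge l1 l0) ≤ 4 * OPTcost p c f :=
  stmt6_general p c hp hc B α hmono f hf l1 l0 hl1 hl0
end

section
/- Let φ = (1 + √5)/2 and c* = (3 − √5)/2. Then (3 − c*)/(2 − c*) = 2 − c* = 1/(1 − c*) = φ, and for every real c with 0 < c < 1/2, max{(3 − c)/(2 − c), 2 − c, 1/(1 − c)} ≥ φ; thus the minimum over c ∈ (0, 1/2) of max{(3 − c)/(2 − c), 2 − c, 1/(1 − c)} equals the golden ratio φ and is attained at c = (3 − √5)/2. -/
theorem stmt10 :
    ((3 - (3 - Real.sqrt 5) / 2) / (2 - (3 - Real.sqrt 5) / 2) = (1 + Real.sqrt 5) / 2 ∧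
      2 - (3 - Real.sqrt 5) / 2 = (1 + Real.sqrt 5) / 2 ∧
      1 / (1 - (3 - Real.sqrt 5) / 2) = (1 + Real.sqrt 5) / 2) ∧
    (∀ c : ℝ, 0 < c → c < 1 / 2 →
      (1 + Real.sqrt 5) / 2 ≤ max ((3 - c) / (2 - c)) (max (2 - c) (1 / (1 - c)))) ∧
    IsLeast {x : ℝ | ∃ c : ℝ, 0 < c ∧ c < 1 / 2 ∧
        x = max ((3 - c) / (2 - c)) (max (2 - c) (1 / (1 - c)))}
      ((1 + Real.sqrt 5) / 2) := by
  have hs : Real.sqrt 5 * Real.sqrt 5 = 5 := Real.mul_self_sqrt (by norm_num)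
  have h2 : (2:ℝ) < Real.sqrt 5 := by nlinarith [Real.sqrt_nonneg 5]
  have h3 : Real.sqrt 5 < 3 := by nlinarith [Real.sqrt_nonneg 5]
  have e1 : (3 - (3 - Real.sqrt 5) / 2) / (2 - (3 - Real.sqrt 5) / 2) = (1 + Real.sqrt 5) / 2 := by
    rw [div_eq_iff (by nlinarith)]; nlinarith
  have e3 : 1 / (1 - (3 - Real.sqrt 5) / 2) = (1 + Real.sqrt 5) / 2 := by
    rw [div_eq_iff (by nlinarith)]; nlinarith
  have key : ∀ c : ℝ, 0 < c → c < 1 / 2 →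
      (1 + Real.sqrt 5) / 2 ≤ max ((3 - c) / (2 - c)) (max (2 - c) (1 / (1 - c))) := by
    intro c hc hc2
    rcases le_or_gt c ((3 - Real.sqrt 5) / 2) with h | h
    · exact le_trans (by linarith) (le_max_of_le_right (le_max_left _ _))
    · refine le_trans ?_ (le_max_of_le_right (le_max_right _ _))
      have h1c : 0 < 1 - c := by linarith
      rw [le_div_iff₀ h1c]
      nlinarith
  refine ⟨⟨e1, by ring, e3⟩, key, ⟨⟨(3 - Real.sqrt 5) / 2, by linarith, by linarith, ?_⟩, ?_⟩⟩
  · rw [e1, (by ring : 2 - (3 - Real.sqrt 5) / 2 = (1 + Real.sqrt 5) / 2), e3, max_self, max_self]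
  · rintro x ⟨c, hc, hc2, rfl⟩; exact key c hc hc2
end
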